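/- arXiv:0809.2618 — 2 statements merged into one kernel-verified Lean document; each statement's English description precedes it below -/
import Mathlib

section
/- Let S = {(x,y,t) : x = yG(t)} ⊂ ℍ¹ with G ∈ C¹, G' ≥ 0, p₀ = (0,0,t₀), and ρ the gauge distance from p₀. With Yρ = p̄X₁ρ + q̄X₂ρ and A = ⟨ζ,ν^H⟩ + f·ω̄ as computed on S (ζ = xX₁+yX₂, f = 2(t-t₀)), one has at every point of S with ρ > 0: Yρ·A = 16(t-t₀)²·(y²/2)G'(t) / (ρ³(1+(y²/2)G'(t))), and consequently 0 ≤ Yρ·A ≤ ρ, so |ρ - Yρ·A| ≤ ρ. -/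
lemma mul_div_mul_sqrt_mul_div_sqrt_mul {u : ℝ} (hu : 0 < u) (a b r e : ℝ) :
    a * u / (r * √u) * (b / (√u * e)) = a * b / (r * e) := by
  have hsqrt : √u * √u = u := Real.mul_self_sqrt hu.le
  rw [div_mul_div_comm, show r * √u * (√u * e) = r * e * (√u * √u) by ring, hsqrt,
    show a * u * b = a * b * u by ring, mul_div_mul_right _ _ hu.ne']

lemma mul_div_pow_three_mul_one_add_le {ρ q c : ℝ} (hρ : 0 < ρ) (hq : q ≤ ρ ^ 4)
    (hc : 0 ≤ c) : q * c / (ρ ^ 3 * (1 + c)) ≤ ρ := by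
  rw [div_le_iff₀ (by positivity)]
  calc q * c ≤ ρ ^ 4 * c := mul_le_mul_of_nonneg_right hq hc
    _ ≤ ρ * (ρ ^ 3 * (1 + c)) := by nlinarith [pow_pos hρ 4]

theorem strip_key_estimate_general (G : ℝ → ℝ)
    (hG' : ∀ s, 0 ≤ deriv G s) (y t t₀ ρ : ℝ) (hρpos : 0 < ρ)
    (hρ : ρ ^ 4 = y ^ 4 * (1 + G t ^ 2) ^ 2 + 16 * (t - t₀) ^ 2) :
    (-(4 * y * (t - t₀) * (1 + G t ^ 2)) / (ρ ^ 3 * Real.sqrt (1 + G t ^ 2)))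
        * (-(2 * (t - t₀) * y * deriv G t) /
            (Real.sqrt (1 + G t ^ 2) * (1 + y ^ 2 / 2 * deriv G t)))
      = 16 * (t - t₀) ^ 2 * (y ^ 2 / 2 * deriv G t) /
          (ρ ^ 3 * (1 + y ^ 2 / 2 * deriv G t)) ∧
    0 ≤ (-(4 * y * (t - t₀) * (1 + G t ^ 2)) / (ρ ^ 3 * Real.sqrt (1 + G t ^ 2)))
        * (-(2 * (t - t₀) * y * deriv G t) /
            (Real.sqrt (1 + G t ^ 2) * (1 + y ^ 2 / 2 * deriv G t))) ∧
    (-(4 * y * (t - t₀) * (1 + G t ^ 2)) / (ρ ^ 3 * Real.sqrt (1 + G t ^ 2)))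
        * (-(2 * (t - t₀) * y * deriv G t) /
            (Real.sqrt (1 + G t ^ 2) * (1 + y ^ 2 / 2 * deriv G t)))
      ≤ ρ ∧
    |ρ - (-(4 * y * (t - t₀) * (1 + G t ^ 2)) / (ρ ^ 3 * Real.sqrt (1 + G t ^ 2)))
        * (-(2 * (t - t₀) * y * deriv G t) /
            (Real.sqrt (1 + G t ^ 2) * (1 + y ^ 2 / 2 * deriv G t)))|
      ≤ ρ := by
  have hc : 0 ≤ y ^ 2 / 2 * deriv G t := mul_nonneg (by positivity) (hG' t)
  have hq : 16 * (t - t₀) ^ 2 ≤ ρ ^ 4 := by rw [hρ]; nlinarith [sq_nonneg (y ^ 2 * (1 + G t ^ 2))]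
  have heq : (-(4 * y * (t - t₀) * (1 + G t ^ 2)) / (ρ ^ 3 * Real.sqrt (1 + G t ^ 2)))
        * (-(2 * (t - t₀) * y * deriv G t) /
            (Real.sqrt (1 + G t ^ 2) * (1 + y ^ 2 / 2 * deriv G t)))
      = 16 * (t - t₀) ^ 2 * (y ^ 2 / 2 * deriv G t) /
          (ρ ^ 3 * (1 + y ^ 2 / 2 * deriv G t)) := by
    rw [← neg_mul, mul_div_mul_sqrt_mul_div_sqrt_mul (by positivity)]
    ring
  have hnonneg : 0 ≤ 16 * (t - t₀) ^ 2 * (y ^ 2 / 2 * deriv G t) /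
      (ρ ^ 3 * (1 + y ^ 2 / 2 * deriv G t)) := by positivity
  have hle := mul_div_pow_three_mul_one_add_le hρpos hq hc
  rw [heq]
  exact ⟨rfl, hnonneg, hle, abs_sub_le_of_nonneg_of_le hρpos.le le_rfl hnonneg hle⟩

/-- On a graphical strip `S = {x = yG(t)}` with `G' ≥ 0`, `p₀ = (0,0,t₀)`, and `ρ`
the gauge distance from `p₀` (so `ρ⁴ = y⁴(1+G²)² + 16(t-t₀)²`), with
`Yρ = -4y(t-t₀)(1+G²)/(ρ³√(1+G²))` and `A = -2(t-t₀)yG'/(√(1+G²)(1+(y²/2)G'))`,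
one has `Yρ·A = 16(t-t₀)²(y²/2)G'/(ρ³(1+(y²/2)G'))`, hence `0 ≤ Yρ·A ≤ ρ` and
`|ρ - Yρ·A| ≤ ρ`. -/
theorem strip_key_estimate (G : ℝ → ℝ) (hG : ContDiff ℝ 1 G)
    (hG' : ∀ s, 0 ≤ deriv G s) (y t t₀ ρ : ℝ) (hρpos : 0 < ρ)
    (hρ : ρ ^ 4 = y ^ 4 * (1 + G t ^ 2) ^ 2 + 16 * (t - t₀) ^ 2) :
    (-(4 * y * (t - t₀) * (1 + G t ^ 2)) / (ρ ^ 3 * Real.sqrt (1 + G t ^ 2)))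
        * (-(2 * (t - t₀) * y * deriv G t) /
            (Real.sqrt (1 + G t ^ 2) * (1 + y ^ 2 / 2 * deriv G t)))
      = 16 * (t - t₀) ^ 2 * (y ^ 2 / 2 * deriv G t) /
          (ρ ^ 3 * (1 + y ^ 2 / 2 * deriv G t)) ∧
    0 ≤ (-(4 * y * (t - t₀) * (1 + G t ^ 2)) / (ρ ^ 3 * Real.sqrt (1 + G t ^ 2)))
        * (-(2 * (t - t₀) * y * deriv G t) /
            (Real.sqrt (1 + G t ^ 2) * (1 + y ^ 2 / 2 * deriv G t))) ∧
    (-(4 * y * (t - t₀) * (1 + G t ^ 2)) / (ρ ^ 3 * Real.sqrt (1 + G t ^ 2)))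
        * (-(2 * (t - t₀) * y * deriv G t) /
            (Real.sqrt (1 + G t ^ 2) * (1 + y ^ 2 / 2 * deriv G t)))
      ≤ ρ ∧
    |ρ - (-(4 * y * (t - t₀) * (1 + G t ^ 2)) / (ρ ^ 3 * Real.sqrt (1 + G t ^ 2)))
        * (-(2 * (t - t₀) * y * deriv G t) /
            (Real.sqrt (1 + G t ^ 2) * (1 + y ^ 2 / 2 * deriv G t)))|
      ≤ ρ :=
  strip_key_estimate_general G hG' y t t₀ ρ hρpos hρ
end

section
/- Let G ∈ C¹(ℝ) with G' ≥ 0, p₀ = (0,0,t₀), and for r > 0 define P(r) = 2∫_{t₀-r²/4}^{t₀+r²/4} [(r⁴-16(t-t₀)²)^{1/4} + (G'(t)/6)(r⁴-16(t-t₀)²)^{3/4}/(1+G(t)²)] dt (the H-perimeter of the graphical strip S = {x = yG(t)} in the gauge ball B(p₀,r)). Then lim_{r→0⁺} P(r)/r³ = ∫_0^1 (1-τ²)^{1/4} dτ > 0. -/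
/-!
The substitution `t = t₀ + (r²/4)τ` turns the gauge profile `r⁴ - 16(t - t₀)²` into
`r⁴(1 - τ²)`, so that `P(r)/r³ = ½ ∫_{-1}^1 (1 - τ²)^{1/4} dτ + (r²/2) K(r)`, where
`K(r) = ∫_{-1}^1 G'(t₀ + r²τ/4)/(6(1 + G(t₀ + r²τ/4)²)) (1 - τ²)^{3/4} dτ` depends continuously
on `r`. Letting `r → 0⁺` kills the second term, and the first one is `∫_0^1 (1 - τ²)^{1/4} dτ`
by evenness.
-/

open Filter MeasureTheory Set Topology

theorem intervalIntegral.integral_neg_self_eq_two_smul_of_even {E : Type*}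
    [NormedAddCommGroup E] [NormedSpace ℝ E] {f : ℝ → E} (hf : ∀ x, f (-x) = f x) {a : ℝ}
    (hfi : IntervalIntegrable f volume (-a) a) :
    ∫ x in -a..a, f x = (2 : ℝ) • ∫ x in 0..a, f x := by
  have h0 : (0 : ℝ) ∈ uIcc (-a) a := by
    rcases le_total 0 a with h | h
    · exact mem_uIcc.2 (Or.inl ⟨by linarith, h⟩)
    · exact mem_uIcc.2 (Or.inr ⟨h, by linarith⟩)
  have hleft : ∫ x in -a..0, f x = ∫ x in 0..a, f x := by
    simpa [hf] using (intervalIntegral.integral_comp_neg (a := 0) (b := a) f).symm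
  rw [← intervalIntegral.integral_add_adjacent_intervals
    (hfi.mono_set (uIcc_subset_uIcc_left h0)) (hfi.mono_set (uIcc_subset_uIcc_right h0)),
    hleft, two_smul]

theorem Real.pow_four_rpow_div_four {r : ℝ} (hr : 0 ≤ r) (k : ℕ) :
    (r ^ 4) ^ ((k : ℝ) / 4) = r ^ k := by
  rw [← Real.rpow_natCast r 4, ← Real.rpow_mul hr, Nat.cast_ofNat,
    mul_div_cancel₀ _ four_ne_zero, Real.rpow_natCast]

theorem integral_mul_rpow_gauge_eq_rescaled (h : ℝ → ℝ) (q r t₀ : ℝ) :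
    ∫ t in (t₀ - r ^ 2 / 4)..(t₀ + r ^ 2 / 4), h t * (r ^ 4 - 16 * (t - t₀) ^ 2) ^ q
      = r ^ 2 / 4 * (r ^ 4) ^ q *
          ∫ τ in (-1 : ℝ)..1, h (t₀ + r ^ 2 / 4 * τ) * (1 - τ ^ 2) ^ q := by
  have hpt : EqOn
      (fun τ => h (t₀ + r ^ 2 / 4 * τ) * (r ^ 4 - 16 * (t₀ + r ^ 2 / 4 * τ - t₀) ^ 2) ^ q)
      (fun τ => (r ^ 4) ^ q * (h (t₀ + r ^ 2 / 4 * τ) * (1 - τ ^ 2) ^ q)) (uIcc (-1) 1) := by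
    intro τ hτ
    rw [uIcc_of_le (by norm_num), mem_Icc, ← abs_le, ← sq_le_one_iff_abs_le_one] at hτ
    have hfactor : r ^ 4 - 16 * (t₀ + r ^ 2 / 4 * τ - t₀) ^ 2 = r ^ 4 * (1 - τ ^ 2) := by ring
    simp only
    rw [hfactor, Real.mul_rpow (by positivity) (by linarith)]
    ring
  have hsubst := intervalIntegral.smul_integral_comp_add_mul (a := -1) (b := 1)
    (fun t => h t * (r ^ 4 - 16 * (t - t₀) ^ 2) ^ q) (r ^ 2 / 4) t₀
  rw [mul_neg_one, mul_one, ← sub_eq_add_neg] at hsubst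
  rw [← hsubst, intervalIntegral.integral_congr hpt, intervalIntegral.integral_const_mul,
    smul_eq_mul, mul_assoc]

theorem continuous_integral_rescaled {h : ℝ → ℝ} (hh : Continuous h) {q : ℝ} (hq : 0 ≤ q)
    (t₀ : ℝ) :
    Continuous fun r : ℝ => ∫ τ in (-1 : ℝ)..1, h (t₀ + r ^ 2 / 4 * τ) * (1 - τ ^ 2) ^ q := by
  have := Real.continuous_rpow_const hq
  fun_prop

theorem integral_gauge_density_eq {h : ℝ → ℝ} (hh : Continuous h) (t₀ : ℝ) {r : ℝ}
    (hr : 0 ≤ r) :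
    ∫ t in (t₀ - r ^ 2 / 4)..(t₀ + r ^ 2 / 4),
        ((r ^ 4 - 16 * (t - t₀) ^ 2) ^ ((1 : ℝ) / 4)
          + h t * (r ^ 4 - 16 * (t - t₀) ^ 2) ^ ((3 : ℝ) / 4))
      = r ^ 3 / 4 * (∫ τ in (-1 : ℝ)..1, (1 - τ ^ 2) ^ ((1 : ℝ) / 4))
        + r ^ 5 / 4 *
            ∫ τ in (-1 : ℝ)..1, h (t₀ + r ^ 2 / 4 * τ) * (1 - τ ^ 2) ^ ((3 : ℝ) / 4) := by
  have hrpow {q : ℝ} (hq : 0 ≤ q) : Continuous fun t => (r ^ 4 - 16 * (t - t₀) ^ 2) ^ q :=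
    (Real.continuous_rpow_const hq).comp (by fun_prop)
  have hmain := integral_mul_rpow_gauge_eq_rescaled (fun _ => 1) (1 / 4) r t₀
  simp only [one_mul] at hmain
  have h14 : (r ^ 4) ^ ((1 : ℝ) / 4) = r := by simpa using Real.pow_four_rpow_div_four hr 1
  have h34 : (r ^ 4) ^ ((3 : ℝ) / 4) = r ^ 3 := by
    simpa using Real.pow_four_rpow_div_four hr 3
  rw [intervalIntegral.integral_add ?int14 ?int34, hmain,
    integral_mul_rpow_gauge_eq_rescaled, h14, h34]
  · ring
  case int14 => exact (hrpow (by norm_num)).intervalIntegrable _ _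
  case int34 => exact (hh.mul (hrpow (by norm_num))).intervalIntegrable _ _

theorem tendsto_integral_gauge_density_div_cube {h : ℝ → ℝ} (hh : Continuous h) (t₀ : ℝ) :
    Tendsto (fun r => (∫ t in (t₀ - r ^ 2 / 4)..(t₀ + r ^ 2 / 4),
        ((r ^ 4 - 16 * (t - t₀) ^ 2) ^ ((1 : ℝ) / 4)
          + h t * (r ^ 4 - 16 * (t - t₀) ^ 2) ^ ((3 : ℝ) / 4))) / r ^ 3) (𝓝[>] 0)
      (𝓝 ((∫ τ in (-1 : ℝ)..1, (1 - τ ^ 2) ^ ((1 : ℝ) / 4)) / 4)) := by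
  set A := ∫ τ in (-1 : ℝ)..1, (1 - τ ^ 2) ^ ((1 : ℝ) / 4)
  set K := fun r : ℝ =>
    ∫ τ in (-1 : ℝ)..1, h (t₀ + r ^ 2 / 4 * τ) * (1 - τ ^ 2) ^ ((3 : ℝ) / 4)
  have hK : Continuous K := continuous_integral_rescaled hh (by norm_num) t₀
  have hlim : Tendsto (fun r => A / 4 + r ^ 2 / 4 * K r) (𝓝[>] 0) (𝓝 (A / 4)) := by
    refine ((?_ : Continuous fun r => A / 4 + r ^ 2 / 4 * K r).tendsto' 0 _ (by simp)).mono_left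
      nhdsWithin_le_nhds
    fun_prop
  refine hlim.congr' ?_
  filter_upwards [self_mem_nhdsWithin] with r (hr : 0 < r)
  rw [integral_gauge_density_eq hh t₀ hr.le]
  change _ = (r ^ 3 / 4 * A + r ^ 5 / 4 * K r) / r ^ 3
  field_simp

theorem perimeter_density_at_zero_general (G : ℝ → ℝ) (hG : ContDiff ℝ 1 G)
    (t₀ : ℝ) (P : ℝ → ℝ)
    (hP : ∀ r > (0 : ℝ), P r =
      2 * ∫ t in (t₀ - r ^ 2 / 4)..(t₀ + r ^ 2 / 4),
        ((r ^ 4 - 16 * (t - t₀) ^ 2) ^ ((1 : ℝ) / 4)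
          + deriv G t / 6 * (r ^ 4 - 16 * (t - t₀) ^ 2) ^ ((3 : ℝ) / 4)
              / (1 + G t ^ 2))) :
    Tendsto (fun r => P r / r ^ 3) (nhdsWithin 0 (Set.Ioi 0))
      (nhds (∫ τ in (0 : ℝ)..1, (1 - τ ^ 2) ^ ((1 : ℝ) / 4))) ∧
    0 < ∫ τ in (0 : ℝ)..1, (1 - τ ^ 2) ^ ((1 : ℝ) / 4) := by
  have hw : Continuous fun τ : ℝ => (1 - τ ^ 2) ^ ((1 : ℝ) / 4) :=
    (Real.continuous_rpow_const (by norm_num)).comp (by fun_prop)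
  have hcoeff : Continuous fun t => deriv G t / 6 / (1 + G t ^ 2) :=
    ((hG.continuous_deriv le_rfl).div_const 6).div (continuous_const.add (hG.continuous.pow 2))
      fun t => by positivity
  have heven := intervalIntegral.integral_neg_self_eq_two_smul_of_even
    (f := fun τ : ℝ => (1 - τ ^ 2) ^ ((1 : ℝ) / 4)) (fun τ => by simp only [neg_sq])
    (hw.intervalIntegrable (-1) 1)
  refine ⟨?_, intervalIntegral.intervalIntegral_pos_of_pos_on (hw.intervalIntegrable 0 1)
    (fun τ hτ => ?_) one_pos⟩
  · have hlim := (tendsto_integral_gauge_density_div_cube hcoeff t₀).const_mul 2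
    rw [heven, smul_eq_mul, show ∀ x : ℝ, 2 * (2 * x / 4) = x from fun x => by ring] at hlim
    refine hlim.congr' ?_
    filter_upwards [self_mem_nhdsWithin] with r (hr : 0 < r)
    rw [hP r hr, mul_div_assoc]
    simp only [mul_div_right_comm (deriv G _ / 6)]
  · have hpos : 0 < 1 - τ ^ 2 := by nlinarith [hτ.1, hτ.2]
    positivity

/-- For a graphical strip `S = {x = yG(t)}` with `G ∈ C¹`, `G' ≥ 0`, and
`p₀ = (0,0,t₀)`, the H-perimeter `P(r)` of `S` in the gauge ball `B(p₀,r)`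
satisfies `lim_{r→0⁺} P(r)/r³ = ∫₀¹(1-τ²)^{1/4}dτ > 0`. -/
theorem perimeter_density_at_zero (G : ℝ → ℝ) (hG : ContDiff ℝ 1 G)
    (hG' : ∀ t, 0 ≤ deriv G t) (t₀ : ℝ) (P : ℝ → ℝ)
    (hP : ∀ r > (0 : ℝ), P r =
      2 * ∫ t in (t₀ - r ^ 2 / 4)..(t₀ + r ^ 2 / 4),
        ((r ^ 4 - 16 * (t - t₀) ^ 2) ^ ((1 : ℝ) / 4)
          + deriv G t / 6 * (r ^ 4 - 16 * (t - t₀) ^ 2) ^ ((3 : ℝ) / 4)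
              / (1 + G t ^ 2))) :
    Tendsto (fun r => P r / r ^ 3) (nhdsWithin 0 (Set.Ioi 0))
      (nhds (∫ τ in (0 : ℝ)..1, (1 - τ ^ 2) ^ ((1 : ℝ) / 4))) ∧
    0 < ∫ τ in (0 : ℝ)..1, (1 - τ ^ 2) ^ ((1 : ℝ) / 4) :=
  perimeter_density_at_zero_general G hG t₀ P hP
end
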